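/- Let r ≥ 1, let a_1,…,a_r ≥ 2 be integers, and for each i let (p_k^{(i)}) be an integer sequence eventually periodic with preperiod r_i and period dividing s_i, and let f : ℤ^r → ℤ be such that |f(p_{n_1}^{(1)},…,p_{n_r}^{(r)})| ≤ M for all indices. Then the sum α = ∑_{n_1,…,n_r ≥ 0} f(p_{n_1}^{(1)},…,p_{n_r}^{(r)}) ∏_i a_i^{−n_i} equals P(a_1,…,a_r) / ∏_{i=1}^r a_i^{r_i}(a_i^{s_i} − 1) for some polynomial P ∈ ℤ[X_1,…,X_r] whose degree in X_i is at most r_i + s_i and whose coefficients have absolute value at most 2^r M. -/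

import Mathlib

/-!
Write `qᵢ(k)` for the residue of an index `k` modulo the eventual period: `k` itself below the
preperiod `rᵢ`, and `rᵢ + (k - rᵢ) mod sᵢ` beyond it. The summand's `f`-value only depends on the
residue vector `m = (qᵢ(nᵢ))ᵢ`, which ranges over the finite box `∏ [0, rᵢ + sᵢ)`, so the series is
a finite sum over `m` of `f(p_m)` times a product of one-variable sums of `aᵢ^{-k}` over the fibres
`qᵢ⁻¹(mᵢ)`. A fibre is a point or an arithmetic progression of difference `sᵢ`, and its geometric
sum is `Tₘ(aᵢ) / (aᵢ^{rᵢ}(aᵢ^{sᵢ} - 1))` with `Tₘ = X^{r+s-m} - [m < r] X^{r-m}`. Hence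
`P = ∑ₘ f(p_m) ∏ᵢ T_{mᵢ}(Xᵢ)`. In each variable a given exponent occurs in `T_k` for at most two
residues `k`, with coefficient `±1`, so every coefficient of `P` is a sum of at most `2^r` values
of `f`.
-/

open Finset

theorem hasSum_prod_pi_of_nonneg {β : Type*} (n : ℕ) {h : Fin n → β → ℝ} (h0 : ∀ i b, 0 ≤ h i b)
    (hs : ∀ i, Summable (h i)) :
    HasSum (fun g : Fin n → β => ∏ i, h i (g i)) (∏ i, ∑' b, h i b) := by
  induction n with
  | zero => simp
  | succ n ih =>
    have htail := ih (fun i => h0 i.succ) (fun i => hs i.succ)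
    have hsum := (hs 0).mul_of_nonneg htail.summable (h0 0)
      (fun g => prod_nonneg fun i _ => h0 i.succ (g i))
    rw [Fin.prod_univ_succ, ← (Fin.consEquiv fun _ => β).hasSum_iff]
    exact ((hs 0).hasSum.mul htail hsum).congr_fun fun z => by simp [Fin.prod_univ_succ]

theorem hasSum_comp_mul_prod_of_nonneg {n : ℕ} {β γ : Type*} [DecidableEq γ]
    {h : Fin n → β → ℝ} (h0 : ∀ i b, 0 ≤ h i b) (hs : ∀ i, Summable (h i))
    (q : Fin n → β → γ) {B : Finset (Fin n → γ)} (hB : ∀ g : Fin n → β, (fun i => q i (g i)) ∈ B)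
    (G : (Fin n → γ) → ℝ) :
    HasSum (fun g : Fin n → β => G (fun i => q i (g i)) * ∏ i, h i (g i))
      (∑ m ∈ B, G m * ∏ i, ∑' b, if q i b = m i then h i b else 0) := by
  have hsplit : ∀ g : Fin n → β, G (fun i => q i (g i)) * ∏ i, h i (g i)
      = ∑ m ∈ B, G m * ∏ i, if q i (g i) = m i then h i (g i) else 0 := by
    intro g
    simp only [Fintype.prod_ite_zero, mul_ite, mul_zero, ← funext_iff]
    rw [sum_ite_eq, if_pos (hB g)]
  have hfiber : ∀ m : Fin n → γ,
      HasSum (fun g : Fin n → β => G m * ∏ i, if q i (g i) = m i then h i (g i) else 0)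
        (G m * ∏ i, ∑' b, if q i b = m i then h i b else 0) := by
    intro m
    refine (hasSum_prod_pi_of_nonneg n (h := fun i b => if q i b = m i then h i b else 0)
      (fun i b => ?_) fun i => ?_).mul_left (G m)
    · split_ifs <;> simp [h0]
    · refine (hs i).of_nonneg_of_le (fun b => ?_) fun b => ?_ <;> split_ifs <;> simp [h0]
  simp only [hsplit]
  exact hasSum_sum fun m _ => hfiber m

def eventualResidue (r s k : ℕ) : ℕ := if k < r then k else r + (k - r) % s

theorem eventualResidue_lt {r s : ℕ} (hs : 0 < s) (k : ℕ) : eventualResidue r s k < r + s := by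
  unfold eventualResidue
  split_ifs
  · omega
  · have := Nat.mod_lt (k - r) hs; omega

theorem apply_eventualResidue {α : Type*} {r s : ℕ} {u : ℕ → α}
    (hu : ∀ k, r ≤ k → u (k + s) = u k) (k : ℕ) : u (eventualResidue r s k) = u k := by
  have hper : Function.Periodic (fun t => u (r + t)) s := fun t => by
    simpa [add_assoc] using hu (r + t) (by omega)
  unfold eventualResidue
  split_ifs with hk
  · rfl
  · simpa [Nat.add_sub_cancel' (not_lt.mp hk)] using hper.map_mod_nat (k - r)

theorem eventualResidue_eq_iff_of_lt {r s m : ℕ} (hm : m < r) (k : ℕ) :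
    eventualResidue r s k = m ↔ k = m := by
  unfold eventualResidue
  split_ifs <;> omega

theorem eventualResidue_eq_iff_of_le {r s m : ℕ} (hrm : r ≤ m) (hm : m < r + s) (k : ℕ) :
    eventualResidue r s k = m ↔ ∃ j, m + s * j = k := by
  unfold eventualResidue
  split_ifs with hk
  · constructor
    · rintro rfl; omega
    · rintro ⟨j, rfl⟩; omega
  · constructor
    · intro h
      exact ⟨(k - r) / s, by have := Nat.mod_add_div (k - r) s; omega⟩
    · rintro ⟨j, rfl⟩
      rw [show m + s * j - r = (m - r) + s * j by omega, Nat.add_mul_mod_self_left,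
        Nat.mod_eq_of_lt (by omega)]
      omega

theorem hasSum_ite_eventualResidue_eq_of_lt {r s m : ℕ} (hm : m < r) (x : ℝ) :
    HasSum (fun k => if eventualResidue r s k = m then x ^ k else 0) (x ^ m) := by
  convert hasSum_ite_eq m (x ^ m) using 2 with k
  simp only [eventualResidue_eq_iff_of_lt hm]
  split_ifs with h <;> simp [h]

theorem hasSum_ite_eventualResidue_eq_of_le {r s m : ℕ} (hrm : r ≤ m) (hm : m < r + s) {x : ℝ}
    (hx : |x| < 1) :
    HasSum (fun k => if eventualResidue r s k = m then x ^ k else 0) (x ^ m * (1 - x ^ s)⁻¹) := by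
  have hs : 0 < s := by omega
  have hinj : Function.Injective fun j => m + s * j := fun j j' h => by
    simpa [hs.ne'] using h
  rw [← hinj.hasSum_iff fun k hk =>
    if_neg fun h => hk ((eventualResidue_eq_iff_of_le hrm hm k).mp h)]
  have hgeom := (hasSum_geometric_of_abs_lt_one (r := x ^ s) (by
    rw [abs_pow]; exact pow_lt_one₀ (abs_nonneg x) hx hs.ne')).mul_left (x ^ m)
  refine hgeom.congr_fun fun j => ?_
  simp [(eventualResidue_eq_iff_of_le hrm hm _).mpr ⟨j, rfl⟩, pow_add, pow_mul]

theorem hasSum_ite_eventualResidue_eq {r s m : ℕ} (hs : 0 < s) (hm : m < r + s) {a : ℝ}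
    (ha : 1 < a) :
    HasSum (fun k => if eventualResidue r s k = m then a⁻¹ ^ k else 0)
      ((a ^ (r + s - m) - if m < r then a ^ (r - m) else 0) / (a ^ r * (a ^ s - 1))) := by
  have ha0 : a ≠ 0 := by positivity
  have has : a ^ s - 1 ≠ 0 := sub_ne_zero.mpr (one_lt_pow₀ ha hs.ne').ne'
  by_cases hmr : m < r
  · convert hasSum_ite_eventualResidue_eq_of_lt hmr a⁻¹ using 1
    rw [if_pos hmr, pow_sub₀ a ha0 (show m ≤ r + s by omega), pow_sub₀ a ha0 hmr.le, inv_pow]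
    field_simp
    ring
  · have hx : |a⁻¹| < 1 := by
      rw [abs_inv, abs_of_pos (by linarith)]
      exact inv_lt_one_of_one_lt₀ ha
    convert hasSum_ite_eventualResidue_eq_of_le (not_lt.mp hmr) hm hx using 1
    rw [if_neg hmr, sub_zero, pow_sub₀ a ha0 (show m ≤ r + s by omega), inv_pow, inv_pow]
    field_simp
    ring

section BoxPoly

variable {σ R : Type*} [Fintype σ] [DecidableEq σ] [CommSemiring R]

open MvPolynomial

noncomputable def boxPoly (N : σ → ℕ) (c : (σ → ℕ) → R) : MvPolynomial σ R :=
  ∑ e ∈ Fintype.piFinset fun i => range (N i + 1),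
    monomial (Finsupp.equivFunOnFinite.symm e) (c e)

theorem coeff_boxPoly (N : σ → ℕ) (c : (σ → ℕ) → R) (d : σ →₀ ℕ) :
    (boxPoly N c).coeff d = if ∀ i, d i ≤ N i then c d else 0 := by
  simp only [boxPoly, coeff_sum, coeff_monomial, Equiv.symm_apply_eq, sum_ite_eq',
    Fintype.mem_piFinset, mem_range, Nat.lt_succ_iff]
  rfl

theorem degreeOf_boxPoly_le (N : σ → ℕ) (c : (σ → ℕ) → R) (i : σ) :
    (boxPoly N c).degreeOf i ≤ N i := by
  refine (degreeOf_le_iff).mpr fun d hd => ?_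
  rw [mem_support_iff, coeff_boxPoly] at hd
  by_contra h
  exact hd (if_neg fun h' => h (h' i))

theorem eval_boxPoly_prod_coeff (N : σ → ℕ) {q : σ → Polynomial R}
    (hq : ∀ i, (q i).natDegree ≤ N i) (a : σ → R) :
    eval a (boxPoly N fun e => ∏ i, (q i).coeff (e i)) = ∏ i, (q i).eval (a i) := by
  simp only [boxPoly, map_sum, eval_monomial, Finsupp.prod_fintype _ _ (fun i => pow_zero (a i)),
    Finsupp.coe_equivFunOnFinite_symm, ← prod_mul_distrib]
  refine (prod_univ_sum (fun i => range (N i + 1))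
    fun i k => (q i).coeff k * a i ^ k).symm.trans (prod_congr rfl fun i _ => ?_)
  exact (Polynomial.eval_eq_sum_range' (Nat.lt_succ_of_le (hq i)) _).symm

end BoxPoly

noncomputable def residuePoly (r s k : ℕ) : Polynomial ℤ :=
  Polynomial.X ^ (r + s - k) - if k < r then Polynomial.X ^ (r - k) else 0

theorem eval_residuePoly (r s k : ℕ) (x : ℤ) :
    (residuePoly r s k).eval x = x ^ (r + s - k) - if k < r then x ^ (r - k) else 0 := by
  unfold residuePoly
  split_ifs <;> simp

theorem natDegree_residuePoly_le (r s k : ℕ) : (residuePoly r s k).natDegree ≤ r + s := by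
  refine (Polynomial.natDegree_sub_le _ _).trans (max_le ?_ ?_)
  · exact Polynomial.natDegree_X_pow_le _ |>.trans (by omega)
  · split_ifs
    · exact Polynomial.natDegree_X_pow_le _ |>.trans (by omega)
    · simp

theorem sum_abs_coeff_residuePoly_le (r s e : ℕ) :
    ∑ k ∈ range (r + s), |(residuePoly r s k).coeff e| ≤ 2 := by
  have hone : ∀ c, ∑ k ∈ range (r + s), (if e + k = c then (1 : ℤ) else 0) ≤ 1 := fun c => by
    rw [sum_boole]
    exact_mod_cast card_le_one.mpr fun k hk k' hk' => by simp at hk hk'; omega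
  have hterm : ∀ k ∈ range (r + s), |(residuePoly r s k).coeff e|
      ≤ (if e + k = r + s then 1 else 0) + (if e + k = r then 1 else 0) := fun k hk => by
    rw [mem_range] at hk
    simp only [residuePoly, Polynomial.coeff_sub, Polynomial.coeff_X_pow,
      apply_ite (Polynomial.coeff · e), Polynomial.coeff_zero]
    split_ifs <;> first | omega | simp
  calc _ ≤ ∑ k ∈ range (r + s),
          ((if e + k = r + s then 1 else 0) + (if e + k = r then 1 else 0)) := sum_le_sum hterm
    _ ≤ 1 + 1 := by rw [sum_add_distrib]; exact add_le_add (hone _) (hone _)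

section PeriodicNumerator

variable {σ : Type*} [Fintype σ] [DecidableEq σ]

open MvPolynomial

noncomputable def periodicNumerator (r s : σ → ℕ) (F : (σ → ℕ) → ℤ) : MvPolynomial σ ℤ :=
  ∑ m ∈ Fintype.piFinset fun i => range (r i + s i),
    C (F m) * boxPoly (fun i => r i + s i)
      fun e => ∏ i, (residuePoly (r i) (s i) (m i)).coeff (e i)

theorem degreeOf_periodicNumerator_le (r s : σ → ℕ) (F : (σ → ℕ) → ℤ) (i : σ) :
    (periodicNumerator r s F).degreeOf i ≤ r i + s i :=
  (degreeOf_sum_le _ _ _).trans <| Finset.sup_le fun _ _ =>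
    (degreeOf_C_mul_le _ _ _).trans (degreeOf_boxPoly_le _ _ _)

theorem eval_periodicNumerator (r s : σ → ℕ) (F : (σ → ℕ) → ℤ) (a : σ → ℤ) :
    eval a (periodicNumerator r s F) = ∑ m ∈ Fintype.piFinset (fun i => range (r i + s i)),
      F m * ∏ i, (residuePoly (r i) (s i) (m i)).eval (a i) := by
  simp only [periodicNumerator, map_sum, map_mul, eval_C,
    eval_boxPoly_prod_coeff _ fun i => natDegree_residuePoly_le _ _ _]

theorem abs_coeff_periodicNumerator_le (r s : σ → ℕ) {F : (σ → ℕ) → ℤ} {M : ℤ}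
    (hF : ∀ m, |F m| ≤ M) (d : σ →₀ ℕ) :
    |(periodicNumerator r s F).coeff d| ≤ 2 ^ Fintype.card σ * M := by
  have hM : 0 ≤ M := (abs_nonneg _).trans (hF 0)
  have hbox : ∀ m : σ → ℕ, |(boxPoly (fun i => r i + s i) fun e =>
      ∏ i, (residuePoly (r i) (s i) (m i)).coeff (e i)).coeff d|
        ≤ ∏ i, |(residuePoly (r i) (s i) (m i)).coeff (d i)| := fun m => by
    rw [coeff_boxPoly, ← abs_prod]
    split_ifs <;> simp
  calc |(periodicNumerator r s F).coeff d|
      ≤ ∑ m ∈ Fintype.piFinset (fun i => range (r i + s i)),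
          M * ∏ i, |(residuePoly (r i) (s i) (m i)).coeff (d i)| := by
        simp only [periodicNumerator, coeff_sum, coeff_C_mul]
        refine (abs_sum_le_sum_abs _ _).trans (sum_le_sum fun m _ => ?_)
        rw [abs_mul]
        exact mul_le_mul (hF m) (hbox m) (abs_nonneg _) hM
    _ = M * ∏ i, ∑ k ∈ range (r i + s i), |(residuePoly (r i) (s i) k).coeff (d i)| := by
        rw [← mul_sum, prod_univ_sum]
    _ ≤ M * ∏ _i : σ, 2 :=
        mul_le_mul_of_nonneg_left (prod_le_prod (fun i _ => sum_nonneg fun _ _ => abs_nonneg _)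
          fun i _ => sum_abs_coeff_residuePoly_le _ _ _) hM
    _ = 2 ^ Fintype.card σ * M := by rw [prod_const, card_univ, mul_comm]

end PeriodicNumerator

theorem stmt_10_general (r : ℕ) (a : Fin r → ℕ) (ha : ∀ i, 2 ≤ a i)
    (p : Fin r → ℕ → ℤ) (rr ss : Fin r → ℕ) (hss : ∀ i, 1 ≤ ss i)
    (hper : ∀ i, ∀ k, rr i ≤ k → p i (k + ss i) = p i k)
    (f : (Fin r → ℤ) → ℤ) (M : ℤ)
    (hM : ∀ n : Fin r → ℕ, |f (fun i => p i (n i))| ≤ M) :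
    Summable (fun n : Fin r → ℕ =>
      (f (fun i => p i (n i)) : ℝ) / ∏ i, (a i : ℝ) ^ (n i)) ∧
    ∃ P : MvPolynomial (Fin r) ℤ,
      (∀ i, P.degreeOf i ≤ rr i + ss i) ∧
      (∀ m : Fin r →₀ ℕ, |MvPolynomial.coeff m P| ≤ 2 ^ r * M) ∧
      (∑' n : Fin r → ℕ, (f (fun i => p i (n i)) : ℝ) / ∏ i, (a i : ℝ) ^ (n i))
        = ((MvPolynomial.eval (fun i => (a i : ℤ)) P : ℤ) : ℝ) /
            ∏ i, (a i : ℝ) ^ (rr i) * ((a i : ℝ) ^ (ss i) - 1) := by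
  set F : (Fin r → ℕ) → ℤ := fun m => f fun i => p i (m i)
  have ha' : ∀ i, (1 : ℝ) < a i := fun i => by exact_mod_cast (ha i : 2 ≤ a i)
  have hterm : ∀ n : Fin r → ℕ, (f (fun i => p i (n i)) : ℝ) / ∏ i, (a i : ℝ) ^ n i
      = F (fun i => eventualResidue (rr i) (ss i) (n i)) * ∏ i, (a i : ℝ)⁻¹ ^ n i := fun n => by
    simp only [F, apply_eventualResidue (hper _), inv_pow, prod_inv_distrib, div_eq_mul_inv]
  have hsum := hasSum_comp_mul_prod_of_nonneg (h := fun i k => (a i : ℝ)⁻¹ ^ k)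
    (fun i k => by positivity)
    (fun i => summable_geometric_of_lt_one (by positivity) (inv_lt_one_of_one_lt₀ (ha' i)))
    (fun i => eventualResidue (rr i) (ss i)) (B := Fintype.piFinset fun i => range (rr i + ss i))
    (fun n => Fintype.mem_piFinset.mpr fun i => mem_range.mpr (eventualResidue_lt (hss i) _))
    (fun m => (F m : ℝ))
  simp only [← hterm] at hsum
  refine ⟨hsum.summable, periodicNumerator rr ss F, degreeOf_periodicNumerator_le rr ss F,
    fun d => by simpa using abs_coeff_periodicNumerator_le rr ss hM d, hsum.tsum_eq.trans ?_⟩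
  rw [eval_periodicNumerator, Int.cast_sum, sum_div]
  refine sum_congr rfl fun m hm => ?_
  rw [Fintype.mem_piFinset] at hm
  simp only [fun i => (hasSum_ite_eventualResidue_eq (hss i) (mem_range.mp (hm i)) (ha' i)).tsum_eq,
    prod_div_distrib, eval_residuePoly]
  push_cast
  ring

/-- The `r`-dimensional version: the multiple series attached to eventually periodic
integer sequences equals `P(a₁,…,a_r) / ∏ aᵢ^{rᵢ}(aᵢ^{sᵢ}−1)` with `deg_{Xᵢ} P ≤ rᵢ + sᵢ`
and coefficients bounded by `2^r M`. -/
theorem stmt_10 (r : ℕ) (hr : 1 ≤ r) (a : Fin r → ℕ) (ha : ∀ i, 2 ≤ a i)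
    (p : Fin r → ℕ → ℤ) (rr ss : Fin r → ℕ) (hss : ∀ i, 1 ≤ ss i)
    (hper : ∀ i, ∀ k, rr i ≤ k → p i (k + ss i) = p i k)
    (f : (Fin r → ℤ) → ℤ) (M : ℤ)
    (hM : ∀ n : Fin r → ℕ, |f (fun i => p i (n i))| ≤ M) :
    Summable (fun n : Fin r → ℕ =>
      (f (fun i => p i (n i)) : ℝ) / ∏ i, (a i : ℝ) ^ (n i)) ∧
    ∃ P : MvPolynomial (Fin r) ℤ,
      (∀ i, P.degreeOf i ≤ rr i + ss i) ∧
      (∀ m : Fin r →₀ ℕ, |MvPolynomial.coeff m P| ≤ 2 ^ r * M) ∧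
      (∑' n : Fin r → ℕ, (f (fun i => p i (n i)) : ℝ) / ∏ i, (a i : ℝ) ^ (n i))
        = ((MvPolynomial.eval (fun i => (a i : ℤ)) P : ℤ) : ℝ) /
            ∏ i, (a i : ℝ) ^ (rr i) * ((a i : ℝ) ^ (ss i) - 1) :=
  stmt_10_general r a ha p rr ss hss hper f M hM
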